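/- arXiv:2605.06325 — 5 statements merged into one kernel-verified Lean document; each statement's English description precedes it below -/
import Mathlib

section
/- If p/q and p'/q' are consecutive elements of the Farey sequence F_n of order n (with p/q < p'/q'), then p'/q' - p/q = 1/(q q'). -/
lemma rat_one_le_sub_mul {u v : ℚ} (h : u < v) :
    1 ≤ (v - u) * ((u.den : ℚ) * (v.den : ℚ)) := by
  have hu := Rat.num_div_den u
  have hv := Rat.num_div_den v
  have hud : (0:ℚ) < u.den := by exact_mod_cast u.pos
  have hvd : (0:ℚ) < v.den := by exact_mod_cast v.pos
  have hk : (v - u) * ((u.den:ℚ) * v.den)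
      = ((v.num * u.den - u.num * v.den : ℤ) : ℚ) := by
    push_cast
    nth_rewrite 1 [← hu, ← hv]
    field_simp
  have hkpos : (0:ℤ) < v.num * u.den - u.num * v.den := by
    have : (0:ℚ) < ((v.num * u.den - u.num * v.den : ℤ) : ℚ) := by
      rw [← hk]
      have : 0 < v - u := by linarith
      positivity
    exact_mod_cast this
  rw [hk]
  exact_mod_cast hkpos

/-- The Farey sequence of order `n`: rationals in `[0,1]` whose (lowest-terms)
denominator is at most `n`. -/
def farey (n : ℕ) : Set ℚ := {x | 0 ≤ x ∧ x ≤ 1 ∧ x.den ≤ n}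

/-- `x` and `y` are consecutive elements of `F_n`. -/
def fareyConsec (n : ℕ) (x y : ℚ) : Prop :=
  x ∈ farey n ∧ y ∈ farey n ∧ x < y ∧ ∀ z ∈ farey n, ¬(x < z ∧ z < y)

theorem farey_consec_diff (n : ℕ) (hn : 0 < n) (x y : ℚ)
    (h : fareyConsec n x y) :
    y - x = 1 / ((x.den : ℚ) * (y.den : ℚ)) := by
  obtain ⟨hx, hy, hxy, hcons⟩ := h
  obtain ⟨hx0, hx1, hxden⟩ := hx
  obtain ⟨hy0, hy1, hyden⟩ := hy
  set a : ℤ := x.num with ha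
  set b : ℤ := (x.den : ℤ) with hb
  have hbpos : (0:ℤ) < b := by rw [hb]; exact_mod_cast x.pos
  have hbn : b ≤ (n:ℤ) := by rw [hb]; exact_mod_cast hxden
  have hdn : ((y.den:ℤ)) ≤ (n:ℤ) := by exact_mod_cast hyden
  -- coprimality of a b, Bezout
  have hcop : IsCoprime a b := by
    rw [Int.isCoprime_iff_gcd_eq_one]
    exact x.reduced
  obtain ⟨u, v, huv⟩ := hcop
  -- construct d' in (n-b, n] with a*d' ≡ -1 mod b
  set q : ℤ := ((n:ℤ) + u) / b with hq
  set d' : ℤ := b * q - u with hd'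
  set c' : ℤ := v + a * q with hc'
  have hbc : b * c' - a * d' = 1 := by
    simp only [hc', hd']
    linear_combination huv
  have hrd : d' = (n:ℤ) - ((n:ℤ) + u) % b := by
    rw [Int.emod_def]; ring
  have hd'le : d' ≤ (n:ℤ) := by
    rw [hrd]
    have := Int.emod_nonneg ((n:ℤ) + u) hbpos.ne'
    linarith
  have hd'gt : (n:ℤ) - b < d' := by
    rw [hrd]
    have := Int.emod_lt_of_pos ((n:ℤ) + u) hbpos
    linarith
  have hd'pos : (0:ℤ) < d' := by linarith
  set z : ℚ := (c' : ℚ) / (d' : ℚ) with hz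
  have hd'q : (0:ℚ) < (d' : ℚ) := by exact_mod_cast hd'pos
  have hbq : (0:ℚ) < (b : ℚ) := by exact_mod_cast hbpos
  have hxq : x = (a:ℚ)/(b:ℚ) := (Rat.num_div_den x).symm
  have hzx : z - x = 1 / ((b:ℚ) * (d':ℚ)) := by
    rw [hz, hxq]
    rw [div_sub_div _ _ hd'q.ne' hbq.ne']
    rw [div_eq_div_iff (by positivity) (by positivity)]
    have h5 : (c':ℚ) * b - (d':ℚ) * a = ((b * c' - a * d' : ℤ) : ℚ) := by push_cast; ring
    rw [h5, hbc]
    push_cast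
    ring
  have hxz : x < z := by
    have : (0:ℚ) < 1 / ((b:ℚ) * (d':ℚ)) := by positivity
    linarith
  -- z's denominator divides d'
  have hzden : ((z.den : ℤ)) ≤ d' := by
    have hdvd : ((z.den:ℤ)) ∣ d' := by
      rw [hz, ← Rat.divInt_eq_div]
      exact Rat.den_dvd c' d'
    exact Int.le_of_dvd hd'pos hdvd
  -- z ≤ y
  have hzy : z ≤ y := by
    by_contra hlt
    push_neg at hlt
    have h2 : 1 ≤ (y - x) * ((x.den : ℚ) * (y.den : ℚ)) := rat_one_le_sub_mul hxy
    have h3 : 1 ≤ (z - y) * ((y.den : ℚ) * (z.den : ℚ)) := rat_one_le_sub_mul hlt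
    have hdq : (0:ℚ) < (y.den : ℚ) := by exact_mod_cast y.pos
    have hzdq : (0:ℚ) < (z.den : ℚ) := by exact_mod_cast z.pos
    have hzydpos : 0 < z - y := by linarith
    have hzdle : (z.den : ℚ) ≤ (d' : ℚ) := by exact_mod_cast hzden
    have h3' : 1 ≤ (z - y) * ((y.den : ℚ) * (d' : ℚ)) := by
      calc 1 ≤ (z - y) * ((y.den : ℚ) * (z.den : ℚ)) := h3
        _ ≤ (z - y) * ((y.den : ℚ) * (d' : ℚ)) := by
            apply mul_le_mul_of_nonneg_left _ hzydpos.le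
            exact mul_le_mul_of_nonneg_left hzdle hdq.le
    -- combine: d ≥ b + d' > n ≥ d, contradiction
    have hbeq : (x.den : ℚ) = (b : ℚ) := by exact_mod_cast rfl
    rw [hbeq] at h2
    have h1 : (z - x) * ((b:ℚ) * (d':ℚ)) = 1 := by
      rw [hzx]; field_simp
    have hdnq : (y.den : ℚ) ≤ (n : ℚ) := by exact_mod_cast hdn
    have hbd'q : (n : ℚ) < (b:ℚ) + (d':ℚ) := by
      have : (n:ℤ) < b + d' := by linarith
      exact_mod_cast this
    nlinarith [mul_le_mul_of_nonneg_right h2 hd'q.le,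
      mul_le_mul_of_nonneg_right h3' hbq.le, mul_pos hdq hbq]
  -- z is in farey n
  have hzf : z ∈ farey n := by
    refine ⟨by linarith, by linarith, ?_⟩
    have : ((z.den : ℤ)) ≤ (n : ℤ) := le_trans hzden hd'le
    exact_mod_cast this
  -- consecutiveness forces z = y
  have hzeq : z = y := by
    rcases lt_or_eq_of_le hzy with hlt | heq
    · exact absurd ⟨hxz, hlt⟩ (hcons z hzf)
    · exact heq
  -- y.den = d'
  have hcop' : Nat.Coprime c'.natAbs d'.natAbs := by
    rw [Nat.coprime_iff_gcd_eq_one, ← Int.gcd]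
    rw [← Int.isCoprime_iff_gcd_eq_one]
    exact ⟨b, -a, by linarith [hbc]⟩
  have hyd : ((y.den : ℤ)) = d' := by
    rw [← hzeq, hz]
    exact Rat.den_div_eq_of_coprime hd'pos hcop'
  have hydq : (y.den : ℚ) = (d' : ℚ) := by exact_mod_cast hyd
  have hbeq : (x.den : ℚ) = (b : ℚ) := by exact_mod_cast rfl
  rw [hbeq, hydq, ← hzeq, hzx]
end

section
/- Let I ⊂ ℝ be a closed interval with 0 < diam(I) < 1 and minimal-order Farey element p/q + k. If s/t + k and u/v + k are consecutive elements of the half Farey partition for I (with s/t < u/v), then 1/(6q²) < u/v - s/t < 1/q². -/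
/-- `F_n^ℤ`: real numbers that are rationals with denominator at most `n`. -/
def fareyZR (n : ℕ) : Set ℝ := {x | ∃ r : ℚ, r.den ≤ n ∧ x = (r : ℝ)}

/-- `x` and `y` are consecutive elements of `F_n^ℤ`. -/
def fareyZRConsec (n : ℕ) (x y : ℝ) : Prop :=
  x ∈ fareyZR n ∧ y ∈ fareyZR n ∧ x < y ∧ ∀ z ∈ fareyZR n, ¬(x < z ∧ z < y)

/-- `p/q + k` is the minimal-order Farey element of `[ξ, η]`, of order `q`. -/
def minOrderFareyElt (ξ η x : ℝ) (q : ℕ) : Prop :=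
  IsLeast {n : ℕ | 0 < n ∧ (fareyZR n ∩ Set.Icc ξ η).Nonempty} q ∧
  fareyZR q ∩ Set.Icc ξ η = {x}

/-- The half Farey partition for an interval with minimal-order Farey element
`p/q + k`, where `a/b + k, p/q + k, c/d + k` are consecutive in `F_q^ℤ` (for `p ≠ 0`). -/
def halfFareyPartition (p a c k : ℤ) (q b d : ℕ) : Set ℝ :=
  if p = 0 then {(k : ℝ) - 1 / 2, (k : ℝ), (k : ℝ) + 1 / 2}
  else
    {x | ∃ j : ℤ, 0 ≤ j ∧ j ≤ ⌈(q : ℝ) / (b : ℝ)⌉ ∧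
      x = ((j : ℝ) * (a : ℝ) + (p : ℝ)) / ((j : ℝ) * (b : ℝ) + (q : ℝ)) + (k : ℝ)} ∪
    {x | ∃ j : ℤ, 0 ≤ j ∧ j ≤ ⌈(q : ℝ) / (d : ℝ)⌉ ∧
      x = ((p : ℝ) + (j : ℝ) * (c : ℝ)) / ((q : ℝ) + (j : ℝ) * (d : ℝ)) + (k : ℝ)}

/-!
Farey neighbours `a/b < p/q < c/d` of order `q` satisfy `p b - a q = c q - p d = 1`. Hence
consecutive mediants `(p + j c)/(q + j d)` differ by exactly `1/((q + j d)(q + (j + 1) d))`;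
on the partition `j d < q` and `d ≤ q`, so the two denominators lie in `[q, 3q)` with the smaller
one below `2q`, which gives both bounds. The left half is the mirror image of the right one, and
for `p = 0` all gaps are `1/2`.
-/

lemma div_mem_fareyZR {n : ℕ} {x y : ℤ} (hy : 0 < y) (hyn : y ≤ n) :
    (x : ℝ) / y ∈ fareyZR n := by
  refine ⟨x / y, ?_, by push_cast; rfl⟩
  have hden : ((x / y : ℚ).den : ℤ) ∣ y := by
    rw [← Rat.divInt_eq_div]; exact Rat.den_dvd x y
  have := Int.le_of_dvd hy hden
  omega

lemma neg_mem_fareyZR {n : ℕ} {x : ℝ} (hx : x ∈ fareyZR n) : -x ∈ fareyZR n := by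
  obtain ⟨r, hr, rfl⟩ := hx
  exact ⟨-r, by rwa [Rat.neg_den], by push_cast; rfl⟩

lemma fareyZRConsec.neg {n : ℕ} {x y : ℝ} (h : fareyZRConsec n x y) :
    fareyZRConsec n (-y) (-x) := by
  obtain ⟨hx, hy, hxy, hno⟩ := h
  refine ⟨neg_mem_fareyZR hy, neg_mem_fareyZR hx, neg_lt_neg hxy, fun z hz ⟨h1, h2⟩ => ?_⟩
  exact hno (-z) (neg_mem_fareyZR hz) ⟨by linarith, by linarith⟩

lemma le_of_div_add_intCast_mem_fareyZR {n : ℕ} {a k : ℤ} {b : ℕ} (hb : 0 < b)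
    (hab : IsCoprime a b) (h : (a : ℝ) / b + k ∈ fareyZR n) : b ≤ n := by
  obtain ⟨r, hr, hre⟩ := h
  have hr_eq : r - k = (a / b : ℚ) := by
    have : ((r - k : ℚ) : ℝ) = ((a / b : ℚ) : ℝ) := by push_cast; linarith
    exact_mod_cast this
  have hden : (((a : ℚ) / (b : ℤ)).den : ℤ) = b :=
    Rat.den_div_eq_of_coprime (by exact_mod_cast hb) (Int.isCoprime_iff_gcd_eq_one.mp hab)
  rw [Int.cast_natCast, ← hr_eq, Rat.sub_intCast_den] at hden
  omega

lemma det_eq_one_of_not_between {a p b q : ℤ} (hb : 0 < b) (hbq : b ≤ q)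
    (hab : IsCoprime a b) (hpq : IsCoprime p q) (hlt : a * q < p * b)
    (hno : ∀ x y : ℤ, 0 < y → y ≤ q → ¬(a * y < x * b ∧ x * q < p * y)) :
    p * b - a * q = 1 := by
  set D := p * b - a * q with hD
  obtain ⟨x, y, hxy⟩ := hpq
  -- the left neighbour `a₀/b₀` of `p/q` with `1 ≤ b₀ ≤ q`, from Bézout
  set m := (x - 1) / q
  set b₀ := (x - 1) % q + 1
  set a₀ := -y - p * m
  have hb₀ : 0 < b₀ := by
    have := Int.emod_nonneg (x - 1) (b := q) (by omega); omega
  have hb₀q : b₀ ≤ q := by have := Int.emod_lt_of_pos (x - 1) (b := q) (by omega); omega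
  have hdet₀ : p * b₀ - a₀ * q = 1 := by
    have := Int.emod_add_mul_ediv (x - 1) q
    linear_combination hxy + p * this
  have hle : a₀ * b ≤ a * b₀ := by
    by_contra! hgt
    exact hno a₀ b₀ hb₀ hb₀q ⟨hgt, by linarith⟩
  -- `q (a b₀ - a₀ b) = b - b₀ D` is a multiple of `q` in `[0, q)`, hence zero
  have hid : q * (a * b₀ - a₀ * b) = b - b₀ * D := by
    linear_combination b * hdet₀ - b₀ * hD
  have hcross : a * b₀ = a₀ * b := by
    by_contra hne
    have : 1 ≤ a * b₀ - a₀ * b := by omega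
    nlinarith
  have hbD : b = b₀ * D := by nlinarith
  have haD : a = a₀ * D := mul_right_cancel₀ hb₀.ne' (by rw [hcross, hbD]; ring)
  have hunit : IsUnit D := hab.isUnit_of_dvd' ⟨a₀, by rw [haD]; ring⟩ ⟨b₀, by rw [hbD]; ring⟩
  rcases Int.isUnit_eq_one_or hunit with h | h <;> omega

lemma fareyZRConsec.not_between {n : ℕ} {a p k : ℤ} {b q : ℕ} (hb : 0 < b) (hq : 0 < q)
    (h : fareyZRConsec n ((a : ℝ) / b + k) ((p : ℝ) / q + k)) :
    a * q < p * b ∧ ∀ x y : ℤ, 0 < y → y ≤ n → ¬(a * y < x * b ∧ x * q < p * y) := by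
  obtain ⟨-, -, hlt, hno⟩ := h
  have hbR : (0 : ℝ) < b := by exact_mod_cast hb
  have hqR : (0 : ℝ) < q := by exact_mod_cast hq
  refine ⟨?_, fun x y hy hyn ⟨hax, hxp⟩ => ?_⟩
  · have : (a : ℝ) / b < p / q := by linarith
    rw [div_lt_div_iff₀ hbR hqR] at this
    exact_mod_cast this
  · have hyR : (0 : ℝ) < y := by exact_mod_cast hy
    have hmem : (x : ℝ) / y + k ∈ fareyZR n := by
      convert div_mem_fareyZR (x := x + k * y) hy hyn using 1
      push_cast; field_simp
    refine hno _ hmem ⟨?_, ?_⟩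
    · have : (a : ℝ) / b < x / y := by rw [div_lt_div_iff₀ hbR hyR]; exact_mod_cast hax
      linarith
    · have : (x : ℝ) / y < p / q := by rw [div_lt_div_iff₀ hyR hqR]; exact_mod_cast hxp
      linarith

lemma fareyZRConsec.det_eq_one_of_den_right {a p k : ℤ} {b q : ℕ} (hb : 0 < b)
    (hab : IsCoprime a b) (hpq : IsCoprime p q)
    (h : fareyZRConsec q ((a : ℝ) / b + k) ((p : ℝ) / q + k)) :
    p * b - a * q = 1 := by
  have hbq : b ≤ q := le_of_div_add_intCast_mem_fareyZR hb hab h.1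
  obtain ⟨hlt, hno⟩ := h.not_between hb (by omega)
  exact det_eq_one_of_not_between (by omega) (by omega) hab hpq hlt hno

lemma fareyZRConsec.det_eq_one_of_den_left {p c k : ℤ} {q d : ℕ} (hd : 0 < d)
    (hcd : IsCoprime c d) (hpq : IsCoprime p q)
    (h : fareyZRConsec q ((p : ℝ) / q + k) ((c : ℝ) / d + k)) :
    c * q - p * d = 1 := by
  have h' : fareyZRConsec q (((-c : ℤ) : ℝ) / d + ((-k : ℤ) : ℝ))
      (((-p : ℤ) : ℝ) / q + ((-k : ℤ) : ℝ)) := by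
    convert h.neg using 1 <;> push_cast <;> ring
  linarith [h'.det_eq_one_of_den_right hd hcd.neg_left hpq.neg_left]

lemma mediant_succ_sub_mediant {p q c d i : ℝ} (hdet : c * q - p * d = 1)
    (h₀ : q + i * d ≠ 0) (h₁ : q + (i + 1) * d ≠ 0) :
    (p + (i + 1) * c) / (q + (i + 1) * d) - (p + i * c) / (q + i * d) =
      1 / ((q + i * d) * (q + (i + 1) * d)) := by
  field_simp
  linear_combination hdet

lemma one_div_mul_mem_Ioo {q w w' : ℝ} (hqw : q ≤ w) (hw : w < 2 * q) (hww' : w < w')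
    (hw' : w' < 3 * q) : 1 / (w * w') ∈ Set.Ioo (1 / (6 * q ^ 2)) (1 / q ^ 2) := by
  have hq : 0 < q := by linarith
  constructor
  · exact one_div_lt_one_div_of_lt (by nlinarith) (by nlinarith)
  · exact one_div_lt_one_div_of_lt (by positivity) (by nlinarith)

lemma mediant_succ_sub_mediant_mem_Ioo {p q c d i : ℝ} (hdet : c * q - p * d = 1)
    (hd : 0 < d) (hdq : d ≤ q) (hi : 0 ≤ i) (hid : i * d < q) :
    (p + (i + 1) * c) / (q + (i + 1) * d) - (p + i * c) / (q + i * d) ∈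
      Set.Ioo (1 / (6 * q ^ 2)) (1 / q ^ 2) := by
  have hid₀ : 0 ≤ i * d := mul_nonneg hi hd.le
  rw [mediant_succ_sub_mediant hdet (by linarith) (by nlinarith)]
  exact one_div_mul_mem_Ioo (by linarith) (by linarith) (by nlinarith) (by nlinarith)

lemma mul_lt_of_add_one_le_ceil {x y : ℝ} (hy : 0 < y) {m : ℤ} (h : m + 1 ≤ ⌈x / y⌉) :
    m * y < x := by
  have : (m : ℝ) < x / y := Int.lt_ceil.mp (by omega)
  rwa [lt_div_iff₀ hy] at this

lemma StrictMonoOn.eq_add_one_of_not_between {α : Type*} [Preorder α] {f : ℤ → α}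
    {s : Set ℤ} (hs : s.OrdConnected) (hf : StrictMonoOn f s) {i j : ℤ} (hi : i ∈ s)
    (hj : j ∈ s) (hlt : f i < f j) (hno : ∀ z ∈ f '' s, ¬(f i < z ∧ z < f j)) :
    j = i + 1 := by
  have hij : i < j := (hf.lt_iff_lt hi hj).mp hlt
  by_contra hne
  have hmem : i + 1 ∈ s := hs.out hi hj ⟨by omega, by omega⟩
  exact hno _ ⟨i + 1, hmem, rfl⟩ ⟨hf hi hmem (by omega), hf hmem hj (by omega)⟩

section halfFareySeq

variable (p a c k : ℤ) (q b d : ℕ)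

/-- The half Farey partition listed in increasing order. -/
noncomputable def halfFareySeq (j : ℤ) : ℝ :=
  if j ≤ 0 then (((-j : ℤ) : ℝ) * a + p) / (((-j : ℤ) : ℝ) * b + q) + k
  else (p + j * c) / (q + j * d) + k

variable {p a c k q b d}

lemma halfFareySeq_of_nonpos {j : ℤ} (hj : j ≤ 0) :
    halfFareySeq p a c k q b d j =
      (((-j : ℤ) : ℝ) * a + p) / (((-j : ℤ) : ℝ) * b + q) + k :=
  if_pos hj

lemma halfFareySeq_of_nonneg {j : ℤ} (hj : 0 ≤ j) :
    halfFareySeq p a c k q b d j = (p + j * c) / (q + j * d) + k := by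
  rcases hj.eq_or_lt with rfl | hj
  · simp [halfFareySeq]
  · simp [halfFareySeq, not_le.mpr hj]

lemma halfFareyPartition_eq_image (hp : p ≠ 0) :
    halfFareyPartition p a c k q b d =
      halfFareySeq p a c k q b d '' Set.Icc (-⌈(q : ℝ) / b⌉) ⌈(q : ℝ) / d⌉ := by
  have hL : 0 ≤ ⌈(q : ℝ) / b⌉ := Int.ceil_nonneg (by positivity)
  have hR : 0 ≤ ⌈(q : ℝ) / d⌉ := Int.ceil_nonneg (by positivity)
  ext x
  rw [halfFareyPartition, if_neg hp]
  constructor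
  · rintro (⟨j, hj0, hjL, rfl⟩ | ⟨j, hj0, hjR, rfl⟩)
    · exact ⟨-j, ⟨by omega, by omega⟩, by rw [halfFareySeq_of_nonpos (by omega), neg_neg]⟩
    · exact ⟨j, ⟨by omega, hjR⟩, halfFareySeq_of_nonneg hj0⟩
  · rintro ⟨j, ⟨hjL, hjR⟩, rfl⟩
    rcases le_total j 0 with hj | hj
    · exact Or.inl ⟨-j, by omega, by omega, halfFareySeq_of_nonpos hj⟩
    · exact Or.inr ⟨j, hj, hjR, halfFareySeq_of_nonneg hj⟩

lemma halfFareySeq_succ_sub_mem_Ioo (hb : 0 < b) (hd : 0 < d) (hbq : b ≤ q) (hdq : d ≤ q)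
    (hL : p * b - a * q = 1) (hR : c * q - p * d = 1) {i : ℤ}
    (hi : -⌈(q : ℝ) / b⌉ ≤ i) (hi' : i + 1 ≤ ⌈(q : ℝ) / d⌉) :
    halfFareySeq p a c k q b d (i + 1) - halfFareySeq p a c k q b d i ∈
      Set.Ioo (1 / (6 * (q : ℝ) ^ 2)) (1 / (q : ℝ) ^ 2) := by
  have hbR : (0 : ℝ) < b := by exact_mod_cast hb
  have hdR : (0 : ℝ) < d := by exact_mod_cast hd
  rcases le_or_gt 0 i with hi0 | hi0
  · rw [halfFareySeq_of_nonneg (by omega), halfFareySeq_of_nonneg hi0, add_sub_add_right_eq_sub]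
    have hRR : (c : ℝ) * q - p * d = 1 := by exact_mod_cast hR
    push_cast
    exact mediant_succ_sub_mediant_mem_Ioo hRR hdR (by exact_mod_cast hdq)
      (by exact_mod_cast hi0) (mul_lt_of_add_one_le_ceil hdR hi')
  · -- reflected: the left family is the right family for `-p/q` and its right neighbour `-a/b`
    rw [halfFareySeq_of_nonpos (by omega), halfFareySeq_of_nonpos hi0.le,
      add_sub_add_right_eq_sub]
    have hLR : (p : ℝ) * b - a * q = 1 := by exact_mod_cast hL
    have hi1 : (i : ℝ) + 1 ≤ 0 := by exact_mod_cast (show i + 1 ≤ 0 by omega)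
    have key := mediant_succ_sub_mediant_mem_Ioo (p := -p) (q := q) (c := -a) (d := b)
      (i := ((-(i + 1) : ℤ) : ℝ))
      (by linear_combination hLR) hbR (by exact_mod_cast hbq) (by push_cast; linarith)
      (mul_lt_of_add_one_le_ceil hbR (by omega))
    convert key using 1
    push_cast
    ring

lemma halfFareySeq_strictMonoOn (hb : 0 < b) (hd : 0 < d) (hbq : b ≤ q) (hdq : d ≤ q)
    (hL : p * b - a * q = 1) (hR : c * q - p * d = 1) :
    StrictMonoOn (halfFareySeq p a c k q b d) (Set.Icc (-⌈(q : ℝ) / b⌉) ⌈(q : ℝ) / d⌉) := by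
  refine strictMonoOn_of_lt_succ Set.ordConnected_Icc fun i _ hi hi' => ?_
  rw [Order.succ_eq_add_one] at hi' ⊢
  have hgap := (halfFareySeq_succ_sub_mem_Ioo (k := k) hb hd hbq hdq hL hR hi.1 hi'.2).1
  have : (0 : ℝ) < 1 / (6 * (q : ℝ) ^ 2) := by
    have : (0 : ℝ) < q := by exact_mod_cast hb.trans_le hbq
    positivity
  linarith

end halfFareySeq

lemma sub_eq_half_of_not_between {x s u : ℝ} (hs : s ∈ ({x - 1 / 2, x, x + 1 / 2} : Set ℝ))
    (hu : u ∈ ({x - 1 / 2, x, x + 1 / 2} : Set ℝ)) (hlt : s < u)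
    (hno : ∀ z ∈ ({x - 1 / 2, x, x + 1 / 2} : Set ℝ), ¬(s < z ∧ z < u)) : u - s = 1 / 2 := by
  simp only [Set.mem_insert_iff, Set.mem_singleton_iff] at hs hu
  rcases hs with rfl | rfl | rfl <;> rcases hu with rfl | rfl | rfl <;> try linarith
  exact absurd ⟨by linarith, by linarith⟩ (hno x (by simp))

theorem halfFareyPartition_consec_gap_general (p a c k : ℤ) (q b d : ℕ)
    (hb : 0 < b) (hd : 0 < d)
    (hpq : Int.gcd p (q : ℤ) = 1)
    (hab : Int.gcd a (b : ℤ) = 1) (hcd : Int.gcd c (d : ℤ) = 1)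
    (hcons : p ≠ 0 →
      fareyZRConsec q ((a : ℝ) / (b : ℝ) + (k : ℝ)) ((p : ℝ) / (q : ℝ) + (k : ℝ)) ∧
      fareyZRConsec q ((p : ℝ) / (q : ℝ) + (k : ℝ)) ((c : ℝ) / (d : ℝ) + (k : ℝ)))
    (s u : ℝ)
    (hs : s ∈ halfFareyPartition p a c k q b d)
    (hu : u ∈ halfFareyPartition p a c k q b d)
    (hlt : s < u)
    (hbetween : ∀ z ∈ halfFareyPartition p a c k q b d, ¬(s < z ∧ z < u)) :
    1 / (6 * (q : ℝ) ^ 2) < u - s ∧ u - s < 1 / (q : ℝ) ^ 2 := by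
  by_cases hp : p = 0
  · subst hp
    obtain rfl : q = 1 := by simpa using hpq
    rw [halfFareyPartition, if_pos rfl] at hs hu hbetween
    rw [sub_eq_half_of_not_between hs hu hlt hbetween]
    norm_num
  obtain ⟨hL, hR⟩ := hcons hp
  rw [← Int.isCoprime_iff_gcd_eq_one] at hpq hab hcd
  have hbq := le_of_div_add_intCast_mem_fareyZR hb hab hL.1
  have hdq := le_of_div_add_intCast_mem_fareyZR hd hcd hR.2.1
  have hdetL := hL.det_eq_one_of_den_right hb hab hpq
  have hdetR := hR.det_eq_one_of_den_left hd hcd hpq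
  rw [halfFareyPartition_eq_image hp] at hs hu hbetween
  obtain ⟨i, hi, rfl⟩ := hs
  obtain ⟨j, hj, rfl⟩ := hu
  obtain rfl := (halfFareySeq_strictMonoOn hb hd hbq hdq hdetL hdetR).eq_add_one_of_not_between
    Set.ordConnected_Icc hi hj hlt hbetween
  exact halfFareySeq_succ_sub_mem_Ioo hb hd hbq hdq hdetL hdetR hi.1 hj.2

theorem halfFareyPartition_consec_gap (ξ η : ℝ) (p a c k : ℤ) (q b d : ℕ)
    (hq : 0 < q) (hb : 0 < b) (hd : 0 < d)
    (h0 : 0 < η - ξ) (h1 : η - ξ < 1)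
    (hmin : minOrderFareyElt ξ η ((p : ℝ) / (q : ℝ) + (k : ℝ)) q)
    (hpq : Int.gcd p (q : ℤ) = 1)
    (hab : Int.gcd a (b : ℤ) = 1) (hcd : Int.gcd c (d : ℤ) = 1)
    (hcons : p ≠ 0 →
      fareyZRConsec q ((a : ℝ) / (b : ℝ) + (k : ℝ)) ((p : ℝ) / (q : ℝ) + (k : ℝ)) ∧
      fareyZRConsec q ((p : ℝ) / (q : ℝ) + (k : ℝ)) ((c : ℝ) / (d : ℝ) + (k : ℝ)))
    (s u : ℝ)
    (hs : s ∈ halfFareyPartition p a c k q b d)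
    (hu : u ∈ halfFareyPartition p a c k q b d)
    (hlt : s < u)
    (hbetween : ∀ z ∈ halfFareyPartition p a c k q b d, ¬(s < z ∧ z < u)) :
    1 / (6 * (q : ℝ) ^ 2) < u - s ∧ u - s < 1 / (q : ℝ) ^ 2 :=
  halfFareyPartition_consec_gap_general p a c k q b d hb hd hpq hab hcd hcons s u hs hu hlt hbetween
end

section
/- For 0 < δ < 1/18, the Hausdorff dimension of Bad(δ) is at least log(⌊1/(18δ)⌋) / log(1/(6δ)). -/
/-!
Fractions `p / q` whose denominators lie in the window `3δ ≤ r q² ≤ 1/2` are `2r`-separated, so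
inside every interval of radius `r` one of three subintervals of radius `r / 3` stays `δ / q²`
away from all of them. Iterating with radii `δ (6δ)ⁿ`, whose windows together cover every
`q ≥ 2`, and placing `N = ⌊1 / (18δ)⌋` children of radius `6δ r` side by side in the safe
subinterval, produces a Cantor set inside `Bad(δ)`. Its natural measure, the image of the uniform
measure on words `ℕ → Fin N`, gives mass at most `3 N⁻ⁿ` to sets of diameter at most `δ (6δ)ⁿ`,
and the mass distribution principle turns this into `dimH ≥ log N / log (1 / (6δ))`.
-/

/-- `Bad(δ)`. -/
def badDelta (δ : ℝ) : Set ℝ :=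
  {x | Irrational x ∧ ∃ Q : ℕ, 0 < Q ∧ ∀ q : ℕ, Q ≤ q → ∀ p : ℤ,
    Int.gcd p (q : ℤ) = 1 → δ / (q : ℝ) ^ 2 ≤ |x - (p : ℝ) / (q : ℝ)|}

open Set Filter MeasureTheory Topology Metric
open scoped ENNReal NNReal

lemma one_div_mul_le_abs_div_sub_div {p p' : ℤ} {q q' : ℕ} (hq : 0 < q) (hq' : 0 < q')
    (hne : (p / q : ℝ) ≠ p' / q') : 1 / (q * q' : ℝ) ≤ |(p / q : ℝ) - p' / q'| := by
  have hq : (0 : ℝ) < q := by exact_mod_cast hq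
  have hq' : (0 : ℝ) < q' := by exact_mod_cast hq'
  have hnum : p * q' - p' * q ≠ 0 := by
    contrapose! hne
    rw [div_eq_div_iff hq.ne' hq'.ne']
    exact_mod_cast sub_eq_zero.mp hne
  have hsub : (p / q : ℝ) - p' / q' = ((p * q' - p' * q : ℤ) : ℝ) / (q * q') := by
    field_simp
    push_cast
    ring
  rw [hsub, abs_div, abs_of_pos (mul_pos hq hq'), ← Int.cast_abs]
  gcongr
  exact_mod_cast Int.one_le_abs hnum

lemma two_mul_le_abs_div_sub_div {r : ℝ} {p p' : ℤ} {q q' : ℕ} (hq : 0 < q) (hq' : 0 < q')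
    (hqr : 2 * r * q ^ 2 ≤ 1) (hq'r : 2 * r * q' ^ 2 ≤ 1) (hne : (p / q : ℝ) ≠ p' / q') :
    2 * r ≤ |(p / q : ℝ) - p' / q'| := by
  have hqq : (0 : ℝ) < q * q' := by positivity
  refine le_trans ?_ (one_div_mul_le_abs_div_sub_div hq hq' hne)
  rw [le_div_iff₀ hqq]
  rcases le_or_gt r 0 with hr | hr
  · nlinarith
  · nlinarith [mul_nonneg hr.le (sq_nonneg ((q : ℝ) - q'))]

lemma card_le_floor_div_add_one {ι : Type*} {T : Finset ι} {f : ι → ℝ} {s a L : ℝ} (hs : 0 < s)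
    (hsep : ∀ i ∈ T, ∀ j ∈ T, i ≠ j → s ≤ |f i - f j|) (hf : ∀ i ∈ T, f i ∈ Icc a (a + L)) :
    T.card ≤ ⌊L / s⌋₊ + 1 := by
  have hnonneg : ∀ i ∈ T, 0 ≤ (f i - a) / s := fun i hi =>
    div_nonneg (sub_nonneg.mpr (hf i hi).1) hs.le
  rw [← Finset.card_range (⌊L / s⌋₊ + 1)]
  refine Finset.card_le_card_of_injOn (fun i => ⌊(f i - a) / s⌋₊) (fun i hi => ?_) ?_
  · rw [Finset.coe_range, mem_Iio, Nat.lt_add_one_iff]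
    exact Nat.floor_le_floor (by gcongr; linarith [(hf i hi).2])
  · intro i hi j hj hij
    by_contra hne
    have hfloor : ⌊(f i - a) / s⌋ = ⌊(f j - a) / s⌋ := by
      rw [← Int.natCast_floor_eq_floor (hnonneg i hi), ← Int.natCast_floor_eq_floor (hnonneg j hj)]
      exact congrArg Nat.cast hij
    have hlt := Int.abs_sub_lt_one_of_floor_eq_floor hfloor
    rw [← sub_div, sub_sub_sub_cancel_right, abs_div, abs_of_pos hs, div_lt_one hs] at hlt
    exact (hsep i hi j hj hne).not_gt hlt

theorem le_dimH_of_measure_le_mul_ediam_rpow {X : Type*} [EMetricSpace X] [MeasurableSpace X]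
    [BorelSpace X] {μ : Measure X} {K : Set X} (hK : μ K ≠ 0) {s : ℝ≥0} {C ε : ℝ≥0∞}
    (hC : C ≠ ∞) (hε : 0 < ε) (h : ∀ U, ediam U ≤ ε → μ U ≤ C * ediam U ^ (s : ℝ)) :
    (s : ℝ≥0∞) ≤ dimH K := by
  refine le_dimH_of_hausdorffMeasure_ne_zero fun hzero => ?_
  have hle : C⁻¹ • μ ≤ μH[s] := Measure.le_hausdorffMeasure s _ ε hε fun U hU =>
    calc C⁻¹ * μ U ≤ C⁻¹ * C * ediam U ^ (s : ℝ) := by rw [mul_assoc]; gcongr; exact h U hU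
      _ ≤ ediam U ^ (s : ℝ) := mul_le_of_le_one_left' (ENNReal.inv_mul_le_one C)
  have hKzero := Measure.le_iff'.mp hle K
  rw [hzero, Measure.smul_apply, smul_eq_mul, nonpos_iff_eq_zero, mul_eq_zero,
    ENNReal.inv_eq_zero] at hKzero
  exact hKzero.elim hC hK

theorem le_dimH_of_measure_le_pow_rpow {X : Type*} [EMetricSpace X] [MeasurableSpace X]
    [BorelSpace X] {μ : Measure X} {K : Set X} (hK : μ K ≠ 0) {θ ρ s : ℝ} (hθ0 : 0 < θ)
    (hθ1 : θ < 1) (hρ : 0 < ρ) (hs : 0 < s) {A : ℝ≥0∞} (hA : A ≠ ∞)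
    (h : ∀ n U, ediam U ≤ ENNReal.ofReal (ρ * θ ^ n) → μ U ≤ A * ENNReal.ofReal (θ ^ n) ^ s) :
    ENNReal.ofReal s ≤ dimH K := by
  refine le_dimH_of_measure_le_mul_ediam_rpow (s := s.toNNReal)
    (C := A * ENNReal.ofReal (θ * ρ)⁻¹ ^ s) hK (by finiteness) (ENNReal.ofReal_pos.mpr hρ)
    fun U hU => ?_
  rw [Real.coe_toNNReal _ hs.le]
  obtain ⟨d, hd0, hdU⟩ : ∃ d, 0 ≤ d ∧ ediam U = ENNReal.ofReal d :=
    ⟨_, ENNReal.toReal_nonneg, (ENNReal.ofReal_toReal (ne_top_of_le_ne_top (by simp) hU)).symm⟩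
  rw [hdU, ENNReal.ofReal_le_ofReal_iff hρ.le] at hU
  rcases hd0.eq_or_lt with rfl | hd
  · -- a set of diameter `0` is covered at every scale, and `(θⁿ)ˢ → 0`
    have hlim : Tendsto (fun n : ℕ => A * ENNReal.ofReal (θ ^ n) ^ s) atTop (𝓝 0) := by
      have hpow : Tendsto (fun n : ℕ => ENNReal.ofReal (θ ^ n)) atTop (𝓝 0) := by
        simpa using ENNReal.tendsto_ofReal (tendsto_pow_atTop_nhds_zero_of_lt_one hθ0.le hθ1)
      have := ((ENNReal.continuous_rpow_const (y := s)).tendsto 0).comp hpow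
      rw [ENNReal.zero_rpow_of_pos hs] at this
      simpa using ENNReal.Tendsto.const_mul this (Or.inr hA)
    have hzero : μ U ≤ 0 := ge_of_tendsto' hlim fun n => h n U (by
      rw [hdU, ENNReal.ofReal_zero]
      exact zero_le)
    exact (nonpos_iff_eq_zero.mp hzero).symm ▸ zero_le
  · obtain ⟨n, hlt, hle⟩ := exists_nat_pow_near_of_lt_one (div_pos hd hρ)
      ((div_le_one hρ).mpr hU) hθ0 hθ1
    rw [lt_div_iff₀ hρ] at hlt
    rw [div_le_iff₀ hρ] at hle
    have hscale : ENNReal.ofReal (θ ^ n) ≤ ENNReal.ofReal (θ * ρ)⁻¹ * ENNReal.ofReal d := by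
      rw [← ENNReal.ofReal_mul (by positivity)]
      refine ENNReal.ofReal_le_ofReal ?_
      rw [le_inv_mul_iff₀ (by positivity)]
      calc θ * ρ * θ ^ n = θ ^ (n + 1) * ρ := by ring
        _ ≤ d := hlt.le
    rw [hdU]
    calc μ U ≤ A * ENNReal.ofReal (θ ^ n) ^ s :=
          h n U (by rw [hdU]; exact ENNReal.ofReal_le_ofReal (by linarith))
      _ ≤ A * (ENNReal.ofReal (θ * ρ)⁻¹ * ENNReal.ofReal d) ^ s := by gcongr
      _ = A * ENNReal.ofReal (θ * ρ)⁻¹ ^ s * ENNReal.ofReal d ^ s := by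
          rw [ENNReal.mul_rpow_of_nonneg _ _ hs.le, mul_assoc]

namespace BadDelta

def AvoidsFractions (δ r c : ℝ) : Prop :=
  ∀ x, |x - c| ≤ r / 3 → ∀ (p : ℤ) (q : ℕ), 3 * δ ≤ r * q ^ 2 → 2 * r * q ^ 2 ≤ 1 →
    δ / q ^ 2 ≤ |x - p / q|

/-- Of the three balls of radius `r / 3` centred at `c - 2r/3`, `c`, `c + 2r/3`, one avoids the
fractions: the fractions in the window are `2r`-separated, so a single one would have to come
within `2r/3` of all three centres. -/
lemma exists_avoidsFractions (δ : ℝ) {r : ℝ} (hr : 0 < r) (c : ℝ) :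
    ∃ c', |c' - c| ≤ 2 * r / 3 ∧ AvoidsFractions δ r c' := by
  by_contra! hbad
  have near : ∀ t, |t - c| ≤ 2 * r / 3 → ∃ (p : ℤ) (q : ℕ), 0 < q ∧ 2 * r * q ^ 2 ≤ 1 ∧
      |(p / q : ℝ) - t| < 2 * r / 3 := by
    intro t ht
    obtain ⟨x, hxt, p, q, hlow, hhigh, hxpq⟩ : ∃ x, |x - t| ≤ r / 3 ∧ ∃ (p : ℤ) (q : ℕ),
        3 * δ ≤ r * q ^ 2 ∧ 2 * r * q ^ 2 ≤ 1 ∧ |x - p / q| < δ / q ^ 2 := by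
      simpa [AvoidsFractions] using hbad t ht
    have hq : 0 < q := Nat.pos_of_ne_zero <| by
      rintro rfl
      simp only [CharP.cast_eq_zero, div_zero, sub_zero, ne_eq, OfNat.ofNat_ne_zero,
        not_false_eq_true, zero_pow] at hxpq
      linarith [abs_nonneg x]
    have hδq : δ / q ^ 2 ≤ r / 3 := by
      rw [div_le_iff₀ (by positivity)]
      linarith
    refine ⟨p, q, hq, hhigh, ?_⟩
    calc |(p / q : ℝ) - t| ≤ |(p / q : ℝ) - x| + |x - t| := abs_sub_le _ _ _
      _ < 2 * r / 3 := by rw [abs_sub_comm]; linarith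
  obtain ⟨p₀, q₀, hq₀, hr₀, h₀⟩ := near (c - 2 * r / 3) (by rw [sub_sub_cancel_left, abs_neg,
    abs_of_pos (by positivity)])
  obtain ⟨p₁, q₁, hq₁, hr₁, h₁⟩ := near c (by rw [sub_self, abs_zero]; positivity)
  obtain ⟨p₂, q₂, hq₂, hr₂, h₂⟩ := near (c + 2 * r / 3) (by rw [add_sub_cancel_left,
    abs_of_pos (by positivity)])
  rw [abs_lt] at h₀ h₁ h₂
  have h01 : (p₀ / q₀ : ℝ) = p₁ / q₁ := by
    by_contra hne
    have := two_mul_le_abs_div_sub_div hq₀ hq₁ hr₀ hr₁ hne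
    exact this.not_gt (abs_sub_lt_iff.mpr ⟨by linarith, by linarith⟩)
  have h21 : (p₂ / q₂ : ℝ) = p₁ / q₁ := by
    by_contra hne
    have := two_mul_le_abs_div_sub_div hq₂ hq₁ hr₂ hr₁ hne
    exact this.not_gt (abs_sub_lt_iff.mpr ⟨by linarith, by linarith⟩)
  linarith

noncomputable def safeCenter (δ r c : ℝ) : ℝ :=
  Classical.epsilon fun c' => |c' - c| ≤ 2 * r / 3 ∧ AvoidsFractions δ r c'

lemma safeCenter_spec (δ : ℝ) {r : ℝ} (hr : 0 < r) (c : ℝ) :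
    |safeCenter δ r c - c| ≤ 2 * r / 3 ∧ AvoidsFractions δ r (safeCenter δ r c) :=
  Classical.epsilon_spec (exists_avoidsFractions δ hr c)

noncomputable def rad (δ : ℝ) (n : ℕ) : ℝ := δ * (6 * δ) ^ n

/-- The `N` children of a level-`n` interval have radius `rad δ (n + 1)` and sit side by side
from the left end of the interval's safe ball; they fit in it when `18 δ N ≤ 1`. -/
noncomputable def center (δ : ℝ) (N : ℕ) : (n : ℕ) → (Fin n → Fin N) → ℝ
  | 0, _ => 0
  | n + 1, a => safeCenter δ (rad δ n) (center δ N n (Fin.init a)) - rad δ n / 3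
      + (2 * (a (Fin.last n) : ℕ) + 1) * rad δ (n + 1)

section Tree

variable {δ : ℝ} {N : ℕ}

lemma rad_pos (hδ : 0 < δ) (n : ℕ) : 0 < rad δ n := by
  unfold rad
  positivity

lemma rad_succ (δ : ℝ) (n : ℕ) : rad δ (n + 1) = 6 * δ * rad δ n := by
  unfold rad
  ring

lemma six_mul_lt_one (hN : 18 * δ * N ≤ 1) (hN0 : 0 < N) : 6 * δ < 1 := by
  have : (1 : ℝ) ≤ N := by exact_mod_cast hN0
  nlinarith

variable (hδ : 0 < δ) (hN : 18 * δ * N ≤ 1)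
include hδ hN

lemma abs_center_succ_sub_safeCenter {n : ℕ} (a : Fin (n + 1) → Fin N) :
    |center δ N (n + 1) a - safeCenter δ (rad δ n) (center δ N n (Fin.init a))| ≤
      rad δ n / 3 - rad δ (n + 1) := by
  have hj : ((a (Fin.last n) : ℕ) : ℝ) + 1 ≤ N := by exact_mod_cast (a (Fin.last n)).isLt
  have hr := rad_pos hδ n
  rw [center, rad_succ, add_sub_right_comm, sub_sub_cancel_left, abs_le]
  constructor
  · nlinarith [mul_pos hδ hr]
  · nlinarith [mul_le_mul_of_nonneg_right hN hr.le,
      mul_le_mul_of_nonneg_left hj (mul_pos hδ hr).le]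

lemma abs_center_succ_sub_center {n : ℕ} (a : Fin (n + 1) → Fin N) :
    |center δ N (n + 1) a - center δ N n (Fin.init a)| ≤ rad δ n - rad δ (n + 1) := by
  have hchild := abs_center_succ_sub_safeCenter hδ hN a
  have hsafe := (safeCenter_spec δ (rad_pos hδ n) (center δ N n (Fin.init a))).1
  calc _ ≤ _ := abs_sub_le _ (safeCenter δ (rad δ n) (center δ N n (Fin.init a))) _
    _ ≤ rad δ n - rad δ (n + 1) := by linarith

lemma le_abs_center_sub_center : ∀ {n : ℕ} {a b : Fin n → Fin N}, a ≠ b →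
    2 * rad δ n ≤ |center δ N n a - center δ N n b|
  | 0, a, b, hab => absurd (Subsingleton.elim a b) hab
  | n + 1, a, b, hab => by
    by_cases hinit : Fin.init a = Fin.init b
    · have hlast : (a (Fin.last n) : ℕ) ≠ b (Fin.last n) := fun h => hab <| by
        rw [← Fin.snoc_init_self a, ← Fin.snoc_init_self b, hinit, Fin.ext h]
      have hgap : (1 : ℝ) ≤ |((a (Fin.last n) : ℕ) : ℝ) - (b (Fin.last n) : ℕ)| := by
        exact_mod_cast Int.one_le_abs (sub_ne_zero.mpr (Int.ofNat_inj.not.mpr hlast))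
      have hdiff : center δ N (n + 1) a - center δ N (n + 1) b =
          2 * (((a (Fin.last n) : ℕ) : ℝ) - (b (Fin.last n) : ℕ)) * rad δ (n + 1) := by
        simp only [center, hinit]
        ring
      rw [hdiff, abs_mul, abs_mul, abs_two, abs_of_pos (rad_pos hδ (n + 1))]
      nlinarith [rad_pos hδ (n + 1)]
    · have hpar := le_abs_center_sub_center hinit
      have ha := abs_center_succ_sub_center hδ hN a
      have hb := abs_center_succ_sub_center hδ hN b
      have h₁ := abs_sub_le (center δ N n (Fin.init a)) (center δ N (n + 1) a)
        (center δ N n (Fin.init b))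
      have h₂ := abs_sub_le (center δ N (n + 1) a) (center δ N (n + 1) b)
        (center δ N n (Fin.init b))
      rw [abs_sub_comm] at ha
      linarith

end Tree

noncomputable def codePoint (δ : ℝ) (N : ℕ) (ω : ℕ → Fin N) : ℝ :=
  limUnder atTop fun n => center δ N n fun i => ω i

lemma init_prefix {α : Type*} (ω : ℕ → α) (n : ℕ) :
    Fin.init (fun i : Fin (n + 1) => ω i) = fun i : Fin n => ω i :=
  rfl

section Coding

variable {δ : ℝ} {N : ℕ} (hδ : 0 < δ) (hN : 18 * δ * N ≤ 1)
include hδ hN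

lemma abs_center_sub_center_le (ω : ℕ → Fin N) {m n : ℕ} (hnm : n ≤ m) :
    |(center δ N m fun i => ω i) - center δ N n fun i => ω i| ≤ rad δ n - rad δ m := by
  induction m, hnm using Nat.le_induction with
  | base => simp
  | succ m _ ih =>
    have hstep := abs_center_succ_sub_center hδ hN (fun i : Fin (m + 1) => ω i)
    rw [init_prefix] at hstep
    have := abs_sub_le (center δ N (m + 1) fun i => ω i) (center δ N m fun i => ω i)
      (center δ N n fun i => ω i)
    linarith

lemma tendsto_center_codePoint (ω : ℕ → Fin N) :
    Tendsto (fun n => center δ N n fun i => ω i) atTop (𝓝 (codePoint δ N ω)) := by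
  refine (cauchySeq_of_le_geometric (6 * δ) δ (six_mul_lt_one hN (ω 0).pos) fun n => ?_).tendsto_limUnder
  rw [dist_comm, Real.dist_eq]
  have hstep := abs_center_succ_sub_center hδ hN (fun i : Fin (n + 1) => ω i)
  rw [init_prefix] at hstep
  linarith [rad_pos hδ (n + 1), show rad δ n = δ * (6 * δ) ^ n from rfl]

lemma abs_codePoint_sub_center_le (ω : ℕ → Fin N) (n : ℕ) :
    |codePoint δ N ω - center δ N n fun i => ω i| ≤ rad δ n := by
  refine le_of_tendsto ((tendsto_center_codePoint hδ hN ω).sub_const _).abs ?_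
  filter_upwards [eventually_ge_atTop n] with m hnm
  linarith [abs_center_sub_center_le hδ hN ω hnm, rad_pos hδ m]

/-- `q ≥ 2` lies in the window `3 δ ≤ rad δ n q² ≤ 1/2` of some level `n`, and the code point
lies in the safe ball of that level. -/
lemma div_sq_le_abs_codePoint_sub (ω : ℕ → Fin N) {q : ℕ} (hq : 2 ≤ q) (p : ℤ) :
    δ / q ^ 2 ≤ |codePoint δ N ω - p / q| := by
  have h6δ := six_mul_lt_one hN (ω 0).pos
  have hq4 : (4 : ℝ) ≤ q ^ 2 := by
    have : (2 : ℝ) ≤ q := by exact_mod_cast hq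
    nlinarith
  obtain ⟨n, hlt, hle⟩ := exists_nat_pow_near_of_lt_one (x := 3 / (q : ℝ) ^ 2)
    (by positivity) (by rw [div_le_one (by positivity)]; linarith) (by positivity) h6δ
  rw [div_le_iff₀ (by positivity)] at hle
  rw [lt_div_iff₀ (by positivity)] at hlt
  have hball : |codePoint δ N ω - safeCenter δ (rad δ n) (center δ N n fun i => ω i)| ≤
      rad δ n / 3 := by
    have := abs_sub_le (codePoint δ N ω) (center δ N (n + 1) fun i => ω i)
      (safeCenter δ (rad δ n) (center δ N n fun i => ω i))
    have hchild := abs_center_succ_sub_safeCenter hδ hN (fun i : Fin (n + 1) => ω i)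
    rw [init_prefix] at hchild
    linarith [abs_codePoint_sub_center_le hδ hN ω (n + 1)]
  refine (safeCenter_spec δ (rad_pos hδ n) _).2 _ hball p q ?_ ?_ <;> rw [rad]
  · nlinarith
  · rw [pow_succ] at hlt
    nlinarith

lemma codePoint_mem_badDelta (ω : ℕ → Fin N) : codePoint δ N ω ∈ badDelta δ := by
  refine ⟨?_, 2, two_pos, fun q hq p _ => div_sq_le_abs_codePoint_sub hδ hN ω hq p⟩
  rintro ⟨ξ, hξ⟩
  have hden : 2 ≤ 2 * ξ.den := by have := ξ.pos; omega
  have h := div_sq_le_abs_codePoint_sub hδ hN ω hden (2 * ξ.num)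
  rw [← hξ, Rat.cast_def] at h
  push_cast at h
  rw [mul_div_mul_left _ _ two_ne_zero, sub_self, abs_zero] at h
  have : (0 : ℝ) < ξ.den := by exact_mod_cast ξ.pos
  exact (div_pos hδ (by positivity)).not_ge h

lemma measurable_codePoint : Measurable (codePoint δ N) :=
  measurable_of_tendsto_metrizable
    (fun n => (measurable_of_countable (center δ N n)).comp
      (measurable_pi_lambda _ fun _ => measurable_pi_apply _))
    (tendsto_pi_nhds.mpr (tendsto_center_codePoint hδ hN))

end Coding

noncomputable def wordMeasure (N : ℕ) [NeZero N] : Measure (ℕ → Fin N) :=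
  Measure.infinitePi fun _ => ProbabilityTheory.uniformOn univ

instance (N : ℕ) [NeZero N] : IsProbabilityMeasure (wordMeasure N) := by
  unfold wordMeasure
  infer_instance

lemma wordMeasure_prefix_eq (N : ℕ) [NeZero N] {n : ℕ} (a : Fin n → Fin N) :
    wordMeasure N {ω | (fun i : Fin n => ω i) = a} = (N : ℝ≥0∞)⁻¹ ^ n := by
  have hcyl : {ω : ℕ → Fin N | (fun i : Fin n => ω i) = a} =
      Set.pi (Finset.range n) fun i => {b | ∀ h : i < n, b = a ⟨i, h⟩} := by
    ext ω
    simp only [mem_ofPred_eq, Set.mem_pi, Finset.coe_range, mem_Iio, funext_iff, Fin.forall_iff]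
    exact ⟨fun h i hi _ => h i hi, fun h i hi => h i hi hi⟩
  rw [wordMeasure, hcyl, Measure.infinitePi_pi _ fun _ _ => .of_discrete,
    Finset.prod_eq_pow_card (b := (N : ℝ≥0∞)⁻¹) fun i hi => ?_, Finset.card_range]
  have hi : i < n := Finset.mem_range.mp hi
  have hsingle : {b : Fin N | ∀ h : i < n, b = a ⟨i, h⟩} = {a ⟨i, hi⟩} := by
    ext b
    simp [hi]
  rw [hsingle, ProbabilityTheory.uniformOn_univ, Measure.count_singleton, Fintype.card_fin,
    one_div]

noncomputable def codingMeasure (δ : ℝ) (N : ℕ) [NeZero N] : Measure ℝ :=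
  (wordMeasure N).map (codePoint δ N)

section Mass

variable {δ : ℝ} {N : ℕ} [NeZero N] (hδ : 0 < δ) (hN : 18 * δ * N ≤ 1)
include hδ hN

lemma one_le_codingMeasure_badDelta : 1 ≤ codingMeasure δ N (badDelta δ) := by
  have hpre : codePoint δ N ⁻¹' badDelta δ = univ :=
    eq_univ_of_forall (codePoint_mem_badDelta hδ hN)
  calc (1 : ℝ≥0∞) = wordMeasure N (codePoint δ N ⁻¹' badDelta δ) := by rw [hpre, measure_univ]
    _ ≤ codingMeasure δ N (badDelta δ) :=
      Measure.le_map_apply (measurable_codePoint hδ hN).aemeasurable _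

/-- A set of diameter at most `rad δ n` only sees level-`n` intervals whose centres lie within
`2 rad δ n` of one of its points, and there are at most three of those. -/
lemma codingMeasure_le {U : Set ℝ} {n : ℕ} (hU : ediam U ≤ ENNReal.ofReal (rad δ n)) :
    codingMeasure δ N U ≤ 3 * (N : ℝ≥0∞)⁻¹ ^ n := by
  classical
  rcases U.eq_empty_or_nonempty with rfl | ⟨u, hu⟩
  · simp
  set r := rad δ n
  have hr : 0 < r := rad_pos hδ n
  have hUball : U ⊆ closedBall u r := fun x hx =>
    (edist_le_ofReal hr.le).mp ((edist_le_ediam_of_mem hx hu).trans hU)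
  set T := Finset.univ.filter fun a : Fin n → Fin N => |center δ N n a - u| ≤ 2 * r
  have hsub : codePoint δ N ⁻¹' closedBall u r ⊆ ⋃ a ∈ T, {ω | (fun i : Fin n => ω i) = a} := by
    intro ω hω
    rw [mem_preimage, mem_closedBall, Real.dist_eq] at hω
    have hcode := abs_codePoint_sub_center_le hδ hN ω n
    rw [abs_sub_comm] at hcode
    have := abs_sub_le (center δ N n fun i => ω i) (codePoint δ N ω) u
    simp only [mem_iUnion, mem_ofPred_eq, Finset.mem_filter, Finset.mem_univ, true_and, T]
    exact ⟨_, by linarith, rfl⟩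
  have hcard : T.card ≤ 3 := by
    have := card_le_floor_div_add_one (T := T) (f := center δ N n) (a := u - 2 * r) (L := 4 * r)
      (by positivity : 0 < 2 * r) (fun a _ b _ hab => le_abs_center_sub_center hδ hN hab)
      fun a ha => by
        have := abs_le.mp (Finset.mem_filter.mp ha).2
        constructor <;> linarith [this.1, this.2]
    rwa [show 4 * r / (2 * r) = 2 by field_simp; norm_num, Nat.floor_ofNat] at this
  calc codingMeasure δ N U ≤ codingMeasure δ N (closedBall u r) := measure_mono hUball
    _ = wordMeasure N (codePoint δ N ⁻¹' closedBall u r) :=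
      Measure.map_apply (measurable_codePoint hδ hN) measurableSet_closedBall
    _ ≤ ∑ a ∈ T, wordMeasure N {ω | (fun i : Fin n => ω i) = a} :=
      (measure_mono hsub).trans (measure_biUnion_finset_le _ _)
    _ = T.card * (N : ℝ≥0∞)⁻¹ ^ n := by simp only [wordMeasure_prefix_eq, Finset.sum_const,
      nsmul_eq_mul]
    _ ≤ 3 * (N : ℝ≥0∞)⁻¹ ^ n := by gcongr; exact_mod_cast hcard

end Mass

lemma le_dimH_badDelta {δ : ℝ} {N : ℕ} (hδ : 0 < δ) (hN : 18 * δ * N ≤ 1) (hN2 : 2 ≤ N) :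
    ENNReal.ofReal (Real.log N / Real.log (1 / (6 * δ))) ≤ dimH (badDelta δ) := by
  have : NeZero N := ⟨by omega⟩
  have hN2' : (2 : ℝ) ≤ N := by exact_mod_cast hN2
  have h6δ := six_mul_lt_one hN (by omega)
  have h6δ' : 1 < 1 / (6 * δ) := by rw [lt_div_iff₀ (by positivity)]; linarith
  set s := Real.log N / Real.log (1 / (6 * δ)) with hs_def
  have hs : 0 < s := div_pos (Real.log_pos (by linarith)) (Real.log_pos h6δ')
  have hbase : (6 * δ) ^ s = (N : ℝ)⁻¹ := by
    rw [← inv_inv (6 * δ), Real.inv_rpow (by positivity), ← one_div (6 * δ), hs_def,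
      Real.log_div_log, Real.rpow_logb (by positivity) h6δ'.ne' (by positivity)]
  refine le_dimH_of_measure_le_pow_rpow (μ := codingMeasure δ N) (ρ := δ) (A := 3)
    (zero_lt_one.trans_le (one_le_codingMeasure_badDelta hδ hN)).ne' (by positivity) h6δ hδ hs
    (by finiteness) fun n U hU => ?_
  rw [ENNReal.ofReal_rpow_of_nonneg (by positivity) hs.le, ← Real.rpow_pow_comm (by positivity),
    hbase, ENNReal.ofReal_pow (by positivity), ENNReal.ofReal_inv_of_pos (by positivity),
    ENNReal.ofReal_natCast]
  exact codingMeasure_le hδ hN hU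

end BadDelta

theorem badDelta_dimH_lower_bound_general (δ : ℝ) (h0 : 0 < δ) :
    ENNReal.ofReal
      (Real.log (⌊1 / (18 * δ)⌋₊ : ℝ) / Real.log (1 / (6 * δ)))
      ≤ dimH (badDelta δ) := by
  set N := ⌊1 / (18 * δ)⌋₊
  rcases lt_or_ge N 2 with hN2 | hN2
  · have hlog : Real.log N = 0 :=
      Real.log_eq_zero.mpr (by rcases (by omega : N = 0 ∨ N = 1) with h | h <;> simp [h])
    simp [hlog]
  have hN : 18 * δ * N ≤ 1 := by
    have := Nat.floor_le (by positivity : 0 ≤ 1 / (18 * δ))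
    rwa [le_div_iff₀ (by positivity), mul_comm] at this
  exact BadDelta.le_dimH_badDelta h0 hN hN2

theorem badDelta_dimH_lower_bound (δ : ℝ) (h0 : 0 < δ) (h1 : δ < 1 / 18) :
    ENNReal.ofReal
      (Real.log (⌊1 / (18 * δ)⌋₊ : ℝ) / Real.log (1 / (6 * δ)))
      ≤ dimH (badDelta δ) :=
  badDelta_dimH_lower_bound_general δ h0
end

section
/- Let d ∈ ℕ₊, let s ≥ d and j ≥ 2 be integers, and let 0 < β ≤ 1/2. Then j^d · ((⌈j^s β^{−s−1}⌉ + 1)^d − (⌊j^s β^{−s}⌋ − 1)^d) < j^{(s+1)d} β^{−(s+1)d}. -/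
lemma abc_pow_sub_pow (a b : ℝ) (hb : 0 ≤ b) (hab : b ≤ a) :
    ∀ n : ℕ, a ^ (n+1) - b ^ (n+1) ≤ (n+1) * (a - b) * a ^ n := by
  intro n
  induction n with
  | zero => simp
  | succ n ih =>
    have hbn : b ^ (n+1) ≤ a ^ (n+1) := pow_le_pow_left₀ hb hab _
    have ha : 0 ≤ a := hb.trans hab
    have han : (0:ℝ) ≤ a ^ n := pow_nonneg ha n
    calc a ^ (n+2) - b ^ (n+2) = a * (a ^ (n+1) - b ^ (n+1)) + (a - b) * b ^ (n+1) := by ring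
    _ ≤ a * ((n+1) * (a - b) * a ^ n) + (a - b) * a ^ (n+1) := by
        have := mul_le_mul_of_nonneg_left ih ha
        have := mul_le_mul_of_nonneg_left hbn (by linarith : (0:ℝ) ≤ a - b)
        linarith
    _ = ((n:ℝ)+2) * (a - b) * a ^ (n+1) := by ring
    _ = (↑(n+1)+1) * (a - b) * a ^ (n+1) := by push_cast; ring

lemma abc_growth : ∀ e : ℕ, ((e:ℝ)+2) * (17/16) ^ (e+1) ≤ (7/4) ^ (e+2) := by
  intro e
  induction e with
  | zero => norm_num
  | succ e ih =>
    have h1 : ((e:ℝ)+3) * (17/16) ≤ ((e:ℝ)+2) * (7/4) := by nlinarith [e.cast_nonneg (α := ℝ)]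
    have hp : (0:ℝ) ≤ (17/16:ℝ) ^ (e+1) := by positivity
    calc (((e+1:ℕ): ℝ)+2) * (17/16) ^ (e+1+1)
        = (((e:ℝ)+3) * (17/16)) * (17/16) ^ (e+1) := by push_cast; ring
      _ ≤ (((e:ℝ)+2) * (7/4)) * (17/16) ^ (e+1) := by gcongr
      _ = (7/4) * (((e:ℝ)+2) * (17/16)^(e+1)) := by ring
      _ ≤ (7/4) * (7/4) ^ (e+2) := by gcongr
      _ = (7/4) ^ (e+1+2) := by ring

theorem aux_bound_calc (d s j : ℕ) (hd : 0 < d) (hs : d ≤ s) (hj : 2 ≤ j)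
    (β : ℝ) (hβ0 : 0 < β) (hβ : β ≤ 1 / 2) :
    (j : ℝ) ^ d *
        (((⌈(j : ℝ) ^ s * β ^ (-(s : ℤ) - 1)⌉ : ℝ) + 1) ^ d -
          ((⌊(j : ℝ) ^ s * β ^ (-(s : ℤ))⌋ : ℝ) - 1) ^ d) <
      (j : ℝ) ^ ((s + 1) * d) * β ^ (-(((s : ℤ) + 1) * (d : ℤ))) := by
  have hj2 : (2:ℝ) ≤ (j:ℝ) := by exact_mod_cast hj
  have hβinv : (2:ℝ) ≤ β⁻¹ := by
    have h := mul_inv_cancel₀ (ne_of_gt hβ0)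
    nlinarith [inv_pos.mpr hβ0]
  have hβinv0 : (0:ℝ) < β⁻¹ := inv_pos.mpr hβ0
  set X : ℝ := (j : ℝ) ^ s * β ^ (-(s : ℤ) - 1) with hXdef
  set Y : ℝ := (j : ℝ) ^ s * β ^ (-(s : ℤ)) with hYdef
  have hXform : X = (j:ℝ)^s * (β⁻¹)^(s+1) := by
    rw [hXdef, show -(s:ℤ)-1 = -((s+1:ℕ):ℤ) by push_cast; ring, zpow_neg, zpow_natCast, inv_pow]
  have hYform : Y = (j:ℝ)^s * (β⁻¹)^s := by
    rw [hYdef, show -(s:ℤ) = -((s:ℕ):ℤ) by push_cast; ring, zpow_neg, zpow_natCast, inv_pow]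
  have hjpow : ∀ n : ℕ, (2:ℝ)^n ≤ (j:ℝ)^n := fun n => pow_le_pow_left₀ (by norm_num) hj2 n
  have hbpow : ∀ n : ℕ, (2:ℝ)^n ≤ (β⁻¹)^n := fun n => pow_le_pow_left₀ (by norm_num) hβinv n
  have hXge : (2:ℝ)^(2*s+1) ≤ X := by
    rw [hXform, show 2*s+1 = s + (s+1) by ring, pow_add]
    exact mul_le_mul (hjpow s) (hbpow (s+1)) (by positivity) (by positivity)
  have hYge : (2:ℝ)^(2*s) ≤ Y := by
    rw [hYform, show 2*s = s + s by ring, pow_add]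
    exact mul_le_mul (hjpow s) (hbpow s) (by positivity) (by positivity)
  have hs1 : 1 ≤ s := hd.trans_le hs
  have hY4 : (4:ℝ) ≤ Y := by
    refine le_trans ?_ hYge
    calc (4:ℝ) = 2^2 := by norm_num
    _ ≤ 2^(2*s) := pow_le_pow_right₀ (by norm_num) (by omega)
  have hX0 : (0:ℝ) < X := lt_of_lt_of_le (by positivity) hXge
  have hYbX : Y = β * X := by
    rw [hXform, hYform, pow_succ]
    field_simp
  -- strict bounds from ceil/floor
  have hceil : ((⌈X⌉:ℝ) + 1) < X + 2 := by
    have := Int.ceil_lt_add_one X; linarith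
  have hfloor : Y - 2 < (⌊Y⌋:ℝ) - 1 := by
    have := Int.sub_one_lt_floor Y; linarith
  have hA0 : (0:ℝ) ≤ (⌈X⌉:ℝ) + 1 := by
    have := Int.le_ceil X; linarith
  have hpow1 : ((⌈X⌉:ℝ)+1)^d < (X+2)^d := pow_lt_pow_left₀ hceil hA0 hd.ne'
  have hpow2 : (Y-2)^d < ((⌊Y⌋:ℝ)-1)^d := pow_lt_pow_left₀ hfloor (by linarith) hd.ne'
  -- key inequality
  have hbX : (2:ℝ)^(d+1) ≤ β^d * X := by
    have hsplit : (β⁻¹)^(s+1) = (β⁻¹)^(s+1-d) * (β⁻¹)^d := by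
      rw [← pow_add]; congr 1; omega
    have hcancel : β^d * (β⁻¹)^d = 1 := by
      rw [← mul_pow, mul_inv_cancel₀ (ne_of_gt hβ0), one_pow]
    have : β^d * X = (j:ℝ)^s * (β⁻¹)^(s+1-d) := by
      rw [hXform, hsplit]
      calc β^d * ((j:ℝ)^s * ((β⁻¹)^(s+1-d) * (β⁻¹)^d))
          = ((j:ℝ)^s * (β⁻¹)^(s+1-d)) * (β^d * (β⁻¹)^d) := by ring
        _ = (j:ℝ)^s * (β⁻¹)^(s+1-d) := by rw [hcancel, mul_one]
    rw [this]
    calc (2:ℝ)^(d+1) ≤ 2^(s + (s+1-d)) := pow_le_pow_right₀ (by norm_num) (by omega)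
      _ = 2^s * 2^(s+1-d) := pow_add 2 _ _
      _ ≤ (j:ℝ)^s * (β⁻¹)^(s+1-d) :=
          mul_le_mul (hjpow s) (hbpow _) (by positivity) (by positivity)
  have key : (X+2)^d ≤ X^d + (Y-2)^d := by
    obtain ⟨e, rfl⟩ : ∃ e, d = e + 1 := ⟨d - 1, (Nat.succ_pred_eq_of_pos hd).symm⟩
    have hsub := abc_pow_sub_pow (X+2) X (le_of_lt hX0) (by linarith) e
    have hmain : ((e:ℝ)+1) * 2 * (X+2)^e ≤ (Y-2)^(e+1) := by
      match e with
      | 0 => simpa using (by linarith : (2:ℝ) ≤ Y - 2)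
      | (f+1) =>
        have hs2 : 2 ≤ s := by omega
        have hX32 : (32:ℝ) ≤ X := by
          refine le_trans ?_ hXge
          calc (32:ℝ) = 2^5 := by norm_num
          _ ≤ 2^(2*s+1) := pow_le_pow_right₀ (by norm_num) (by omega)
        have hY16 : (16:ℝ) ≤ Y := by
          refine le_trans ?_ hYge
          calc (16:ℝ) = 2^4 := by norm_num
          _ ≤ 2^(2*s) := pow_le_pow_right₀ (by norm_num) (by omega)
        have h1 : X + 2 ≤ 17/16 * X := by linarith
        have h2 : 7/8 * Y ≤ Y - 2 := by linarith
        have hg := abc_growth f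
        have hX2 : (0:ℝ) ≤ X + 2 := by linarith
        calc ((↑(f+1):ℝ)+1) * 2 * (X+2)^(f+1)
            ≤ ((↑(f+1):ℝ)+1) * 2 * (17/16 * X)^(f+1) := by gcongr
          _ = 2 * (((f:ℝ)+2) * (17/16)^(f+1)) * X^(f+1) := by rw [mul_pow]; push_cast; ring
          _ ≤ 2 * (7/4)^(f+2) * X^(f+1) := by gcongr
          _ = (7/8)^(f+2) * 2^(f+2+1) * X^(f+1) := by
              rw [show ((7:ℝ)/4)^(f+2) = (7/8)^(f+2) * 2^(f+2) by rw [← mul_pow]; norm_num,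
                pow_succ]
              ring
          _ ≤ (7/8)^(f+2) * (β^(f+2) * X) * X^(f+1) := by
              have := hbX
              gcongr
          _ = (7/8 * (β * X))^(f+2) := by rw [mul_pow, mul_pow, pow_succ]; ring
          _ = (7/8 * Y)^(f+2) := by rw [hYbX]
          _ ≤ (Y-2)^(f+2) := pow_le_pow_left₀ (by linarith) h2 _
    have harith : ((↑e:ℝ)+1) * ((X+2) - X) * (X+2)^e = ((e:ℝ)+1) * 2 * (X+2)^e := by ring
    have := hsub.trans (le_of_eq harith) |>.trans hmain
    linarith
  -- RHS equality
  have hrhs : (j : ℝ) ^ ((s + 1) * d) * β ^ (-(((s : ℤ) + 1) * (d : ℤ)))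
      = (j:ℝ)^d * X^d := by
    rw [show -(((s:ℤ)+1)*(d:ℤ)) = -(((s+1)*d : ℕ) : ℤ) by push_cast; ring,
      zpow_neg, zpow_natCast, ← inv_pow, hXform, pow_mul, pow_mul, ← mul_pow, ← mul_pow,
      pow_succ]
    ring
  rw [hrhs]
  have hjd : (0:ℝ) < (j:ℝ)^d := by positivity
  have hlt : ((⌈X⌉:ℝ)+1)^d - ((⌊Y⌋:ℝ)-1)^d < X^d := by
    have : ((⌈X⌉:ℝ)+1)^d - ((⌊Y⌋:ℝ)-1)^d < (X+2)^d - (Y-2)^d := by linarith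
    linarith
  calc (j:ℝ)^d * (((⌈X⌉:ℝ)+1)^d - ((⌊Y⌋:ℝ)-1)^d)
      < (j:ℝ)^d * X^d := by exact mul_lt_mul_of_pos_left hlt hjd
end

section
/- Let I ⊂ ℝ be a closed interval with 0 < D := diam(I) < 1. Then there exists a least positive integer q such that F_q^ℤ ∩ I ≠ ∅, and for this q the intersection F_q^ℤ ∩ I consists of exactly one point. -/
theorem exists_min_order_unique_farey_elt (ξ η : ℝ)
    (h0 : 0 < η - ξ) (h1 : η - ξ < 1) :
    ∃ q : ℕ, 0 < q ∧
      (∀ n : ℕ, 0 < n → (fareyZR n ∩ Set.Icc ξ η).Nonempty → q ≤ n) ∧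
      ∃! x : ℝ, x ∈ fareyZR q ∩ Set.Icc ξ η := by
  classical
  have hξη : ξ < η := by linarith
  obtain ⟨r0, hr0l, hr0r⟩ := exists_rat_btwn hξη
  have hS : ∃ n : ℕ, 0 < n ∧ (fareyZR n ∩ Set.Icc ξ η).Nonempty :=
    ⟨r0.den, r0.pos, ⟨(r0 : ℝ), ⟨r0, le_refl _, rfl⟩, ⟨le_of_lt hr0l, le_of_lt hr0r⟩⟩⟩
  set q := Nat.find hS with hqdef
  obtain ⟨hqpos, x0, hx0⟩ := Nat.find_spec hS
  have hmin : ∀ n : ℕ, 0 < n → (fareyZR n ∩ Set.Icc ξ η).Nonempty → q ≤ n :=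
    fun n hn h2 => Nat.find_min' hS ⟨hn, h2⟩
  have hden : ∀ t : ℚ, (t : ℝ) ∈ Set.Icc ξ η → q ≤ t.den := by
    intro t ht
    exact hmin t.den t.pos ⟨(t : ℝ), ⟨t, le_refl _, rfl⟩, ht⟩
  -- Key lemma: no two rationals with denominator ≤ q, both in the interval, with r.num < s.num
  have key : ∀ r s : ℚ, (r : ℝ) ∈ Set.Icc ξ η → (s : ℝ) ∈ Set.Icc ξ η →
      r.den ≤ q → s.den ≤ q → r.num < s.num → False := by
    intro r s hrI hsI hrden hsden hlt
    have hrq : r.den = q := le_antisymm hrden (hden r hrI)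
    have hsq : s.den = q := le_antisymm hsden (hden s hsI)
    have hqQ : (0 : ℚ) < (q : ℚ) := by exact_mod_cast hqpos
    have hq0 : (q : ℚ) ≠ 0 := ne_of_gt hqQ
    set a : ℤ := r.num with ha
    set c : ℤ := s.num with hc
    have hr_eq : r = (a : ℚ) / (q : ℚ) := by
      rw [← Rat.num_div_den r, hrq]
    have hs_eq : s = (c : ℚ) / (q : ℚ) := by
      rw [← Rat.num_div_den s, hsq]
    -- q ≥ 2 : else r, s are integers at distance ≥ 1
    have hq2 : 2 ≤ q := by
      by_contra hcon
      have hq1 : q = 1 := by omega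
      have hrint : ((a : ℚ)) = r := (Rat.den_eq_one_iff r).mp (by rw [hrq, hq1])
      have hsint : ((c : ℚ)) = s := (Rat.den_eq_one_iff s).mp (by rw [hsq, hq1])
      have hca : a + 1 ≤ c := hlt
      have h1r : (1 : ℚ) ≤ s - r := by
        rw [← hrint, ← hsint]
        have : (a : ℚ) + 1 ≤ (c : ℚ) := by exact_mod_cast hca
        linarith
      have h1R : (1 : ℝ) ≤ (s : ℝ) - (r : ℝ) := by
        have := (Rat.cast_le (K := ℝ)).mpr h1r
        push_cast at this
        linarith
      have := hrI.1
      have := hsI.2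
      linarith
    -- consider t = (a+1)/q, which lies in the interval
    set t : ℚ := ((a + 1 : ℤ) : ℚ) / (q : ℚ) with ht_def
    have hca : a + 1 ≤ c := hlt
    have hrt : r ≤ t := by
      rw [hr_eq, ht_def, div_le_div_iff₀ hqQ hqQ]
      push_cast
      nlinarith
    have hts : t ≤ s := by
      rw [hs_eq, ht_def, div_le_div_iff₀ hqQ hqQ]
      have : ((a : ℚ) + 1) ≤ (c : ℚ) := by exact_mod_cast hca
      push_cast
      nlinarith
    have htI : (t : ℝ) ∈ Set.Icc ξ η := by
      constructor
      · calc ξ ≤ (r : ℝ) := hrI.1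
          _ ≤ (t : ℝ) := by exact_mod_cast hrt
      · calc (t : ℝ) ≤ (s : ℝ) := by exact_mod_cast hts
          _ ≤ η := hsI.2
    have htdvd : (t.den : ℤ) ∣ (q : ℤ) := by
      have e : t = Rat.divInt (a + 1) (q : ℤ) := by
        rw [Rat.divInt_eq_div, ht_def]; push_cast; ring
      rw [e]; exact Rat.den_dvd _ _
    have htdvd' : t.den ∣ q := by exact_mod_cast htdvd
    have htden : t.den = q :=
      le_antisymm (Nat.le_of_dvd hqpos htdvd') (hden t htI)
    -- hence t.num = a + 1 and gcd(a+1, q) = 1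
    have htnum : t.num = a + 1 := by
      have e1 : t * (q : ℚ) = ((a : ℚ) + 1) := by
        rw [ht_def]; push_cast; field_simp
      have e2 : (t.num : ℚ) = t * (q : ℚ) := by
        conv_lhs => rw [show (t.num : ℚ) = (t.num : ℚ) / (t.den : ℚ) * (t.den : ℚ) by
          field_simp]
        rw [Rat.num_div_den t, htden]
      have : (t.num : ℚ) = ((a + 1 : ℤ) : ℚ) := by rw [e2, e1]; push_cast; ring
      exact_mod_cast this
    have hcop : IsCoprime ((a + 1 : ℤ)) ((q : ℕ) : ℤ) := by
      rw [Int.isCoprime_iff_gcd_eq_one]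
      have := t.reduced
      rw [htnum, htden] at this
      simpa [Int.gcd] using this
    obtain ⟨u, v, huv⟩ := hcop
    set b : ℤ := u % (q : ℤ) with hb_def
    have hqz : ((q : ℤ)) ≠ 0 := by exact_mod_cast hqpos.ne'
    have hqzpos : (0 : ℤ) < (q : ℤ) := by exact_mod_cast hqpos
    have hb0 : 0 ≤ b := Int.emod_nonneg u hqz
    have hbq : b < (q : ℤ) := Int.emod_lt_of_pos u hqzpos
    have hdvd : (q : ℤ) ∣ b * (a + 1) - 1 := by
      refine ⟨-(u / (q : ℤ)) * (a + 1) - v, ?_⟩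
      rw [hb_def, Int.emod_def]
      linear_combination huv
    have hbne : b ≠ 0 := by
      intro hb
      rw [hb] at hdvd
      have h1' : (q : ℤ) ∣ 1 := by simpa using hdvd
      have := Int.le_of_dvd one_pos h1'
      omega
    have hb1 : 1 ≤ b := by omega
    set p : ℤ := (b * (a + 1) - 1) / (q : ℤ) with hp_def
    have hpq : p * (q : ℤ) = b * (a + 1) - 1 := Int.ediv_mul_cancel hdvd
    have hbQ : (0 : ℚ) < (b : ℚ) := by exact_mod_cast hb1
    set w : ℚ := (p : ℚ) / (b : ℚ) with hw_def
    have hpqQ : (p : ℚ) * (q : ℚ) = (b : ℚ) * ((a : ℚ) + 1) - 1 := by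
      exact_mod_cast hpq
    have hb1Q : (1 : ℚ) ≤ (b : ℚ) := by exact_mod_cast hb1
    have hrw : r ≤ w := by
      rw [hr_eq, hw_def, div_le_div_iff₀ hqQ hbQ]
      nlinarith
    have hwt : w ≤ t := by
      rw [ht_def, hw_def, div_le_div_iff₀ hbQ hqQ]
      push_cast
      nlinarith
    have hwI : (w : ℝ) ∈ Set.Icc ξ η := by
      constructor
      · calc ξ ≤ (r : ℝ) := hrI.1
          _ ≤ (w : ℝ) := by exact_mod_cast hrw
      · calc (w : ℝ) ≤ (t : ℝ) := by exact_mod_cast hwt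
          _ ≤ η := htI.2
    have hwdvd : (w.den : ℤ) ∣ b := by
      have e : w = Rat.divInt p b := by rw [Rat.divInt_eq_div, hw_def]
      rw [e]; exact Rat.den_dvd _ _
    have hwden : (w.den : ℤ) ≤ b := Int.le_of_dvd (by omega) hwdvd
    have : q ≤ w.den := hden w hwI
    have : ((q : ℤ)) ≤ (w.den : ℤ) := by exact_mod_cast this
    omega
  refine ⟨q, hqpos, hmin, x0, hx0, ?_⟩
  intro y hy
  obtain ⟨⟨s, hsden, rfl⟩, hsI⟩ := hy
  obtain ⟨⟨r, hrden, rfl⟩, hrI⟩ := hx0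
  have hnum : s.num = r.num := by
    rcases lt_trichotomy s.num r.num with h | h | h
    · exact absurd (key s r hsI hrI hsden hrden h) (fun f => f)
    · exact h
    · exact absurd (key r s hrI hsI hrden hsden h) (fun f => f)
  have hdeneq : s.den = r.den := by
    rw [le_antisymm hsden (hden s hsI), le_antisymm hrden (hden r hrI)]
  have : s = r := by
    rw [← Rat.num_div_den s, ← Rat.num_div_den r, hnum, hdeneq]
  rw [this]
end
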